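/- For all indices i ≠ j in {1,…,n}, the row-sum vectors satisfy [R_i, R_j] = R_i − R_j, where [X,Y] = XY − YX. Consequently, the complex linear span of {R_1, …, R_n} is an n-dimensional Lie subalgebra of 𝔏_GM; for n = 4 this is Model 4.4a, the Felsenstein 1981 model. -/

import Mathlib

open Matrix

noncomputable section

/-- The elementary rate matrix `L_ij`: entry 1 at `(i,j)`, entry −1 at `(j,j)`, 0 elsewhere. -/
def Lmat (n : ℕ) (i j : Fin n) : Matrix (Fin n) (Fin n) ℂ :=
  Matrix.single i j 1 - Matrix.single j j 1

/-- `𝔏_GM`: the complex matrices each of whose columns sums to zero. -/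
def LGMset (n : ℕ) : Set (Matrix (Fin n) (Fin n) ℂ) :=
  {Q | ∀ j, ∑ i, Q i j = 0}

/-- `𝔏_GM⁺`: nonnegative real linear combinations of the elementary rate matrices. -/
def LGMplus (n : ℕ) : Set (Matrix (Fin n) (Fin n) ℂ) :=
  {Q | ∃ α : Fin n → Fin n → ℝ, (∀ i j, 0 ≤ α i j) ∧
    Q = ∑ i, ∑ j, if i = j then 0 else (α i j : ℂ) • Lmat n i j}

/-- Row-sum vectors `R_i = ∑_{j ≠ i} L_ij`. -/
def Rvec (n : ℕ) (i : Fin n) : Matrix (Fin n) (Fin n) ℂ :=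
  ∑ j ∈ Finset.univ.filter (· ≠ i), Lmat n i j

/-! `R_i = P_i - 1`, where `P_i = e_i 𝟙ᵀ` has row `i` all ones. Since `𝟙ᵀ e_j = 1`, the `P_i` satisfy
`P_i P_j = P_i`, so `[R_i, R_j] = [P_i, P_j] = P_i - P_j = R_i - R_j`. The span of the `R_i` is then
closed under brackets because the bracket is bilinear. Every `R_i` has zero column sums, and the
`R_i` are linearly independent because for `b ≠ a` the entry `(a, b)` of `R_i` is `1` if `i = a`
and `0` otherwise. -/

theorem commutator_sub_one_of_mul_eq_left {A : Type*} [Ring A] {p q : A}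
    (hpq : p * q = p) (hqp : q * p = q) :
    (p - 1) * (q - 1) - (q - 1) * (p - 1) = (p - 1) - (q - 1) := by
  noncomm_ring
  rw [hpq, hqp]
  abel

theorem Submodule.commutator_mem_span {R A : Type*} [CommRing R] [Ring A] [Algebra R A]
    {s : Set A} (hs : ∀ x ∈ s, ∀ y ∈ s, x * y - y * x ∈ span R s) {x y : A}
    (hx : x ∈ span R s) (hy : y ∈ span R s) : x * y - y * x ∈ span R s := by
  let bracket : A →ₗ[R] A →ₗ[R] A := LinearMap.mul R A - (LinearMap.mul R A).flip
  have hle : map₂ bracket (span R s) (span R s) ≤ span R s := by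
    rw [map₂_span_span, span_le]
    exact Set.image2_subset_iff.mpr hs
  exact hle (apply_mem_map₂ bracket hx hy)

def rowOnes (n : ℕ) (i : Fin n) : Matrix (Fin n) (Fin n) ℂ :=
  vecMulVec (Pi.single i 1) 1

theorem rowOnes_apply (n : ℕ) (i a b : Fin n) :
    rowOnes n i a b = if a = i then 1 else 0 := by
  simp [rowOnes, vecMulVec_apply, Pi.single_apply]

theorem rowOnes_mul_rowOnes (n : ℕ) (i j : Fin n) : rowOnes n i * rowOnes n j = rowOnes n i := by
  rw [rowOnes, rowOnes, vecMulVec_mul_vecMulVec, one_dotProduct, Finset.sum_pi_single',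
    if_pos (Finset.mem_univ _), one_smul]

theorem Rvec_eq_rowOnes_sub_one (n : ℕ) (i : Fin n) : Rvec n i = rowOnes n i - 1 := by
  have hdiag : Lmat n i i = 0 := sub_self _
  rw [Rvec, Finset.sum_filter_of_ne fun j _ h => by rintro rfl; exact h hdiag]
  have hrow : ∑ j, single i j (1 : ℂ) = rowOnes n i := by
    ext a b
    by_cases hia : a = i <;> simp [rowOnes_apply, Matrix.sum_apply, single_apply, hia, Ne.symm]
  simp only [Lmat, Finset.sum_sub_distrib, hrow, sum_single_eq_diagonal, diagonal_one]

theorem Rvec_apply (n : ℕ) (i a b : Fin n) :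
    Rvec n i a b = (if a = i then 1 else 0) - (if a = b then 1 else 0) := by
  rw [Rvec_eq_rowOnes_sub_one, Matrix.sub_apply, rowOnes_apply, one_apply]

theorem commutator_Rvec (n : ℕ) (i j : Fin n) :
    Rvec n i * Rvec n j - Rvec n j * Rvec n i = Rvec n i - Rvec n j := by
  simp only [Rvec_eq_rowOnes_sub_one]
  exact commutator_sub_one_of_mul_eq_left (rowOnes_mul_rowOnes n i j) (rowOnes_mul_rowOnes n j i)

def rateSubmodule (n : ℕ) : Submodule ℂ (Matrix (Fin n) (Fin n) ℂ) where
  carrier := LGMset n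
  add_mem' hA hB j := by simp [Finset.sum_add_distrib, hA j, hB j]
  zero_mem' j := by simp
  smul_mem' c A hA j := by simp [← Finset.mul_sum, hA j]

theorem Rvec_mem_LGMset (n : ℕ) (i : Fin n) : Rvec n i ∈ LGMset n := fun b => by
  simp [Rvec_apply, Finset.sum_sub_distrib]

theorem linearIndependent_Rvec {n : ℕ} (hn : 2 ≤ n) : LinearIndependent ℂ (Rvec n) := by
  have : Nontrivial (Fin n) := Fin.nontrivial_iff_two_le.mpr hn
  rw [Fintype.linearIndependent_iff]
  intro c hc i
  obtain ⟨b, hbi⟩ := exists_ne i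
  simpa [Rvec_apply, hbi.symm, Matrix.sum_apply] using congrFun (congrFun hc i) b

theorem felsenstein_row_sum_lie_algebra (n : ℕ) (hn : 2 ≤ n) :
    (∀ i j : Fin n, i ≠ j →
      Rvec n i * Rvec n j - Rvec n j * Rvec n i = Rvec n i - Rvec n j) ∧
    (∀ X ∈ Submodule.span ℂ (Set.range (Rvec n)),
      ∀ Y ∈ Submodule.span ℂ (Set.range (Rvec n)),
        X * Y - Y * X ∈ Submodule.span ℂ (Set.range (Rvec n))) ∧
    ((Submodule.span ℂ (Set.range (Rvec n)) : Set (Matrix (Fin n) (Fin n) ℂ)) ⊆ LGMset n) ∧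
    Module.finrank ℂ ↥(Submodule.span ℂ (Set.range (Rvec n))) = n := by
  refine ⟨fun i j _ => commutator_Rvec n i j, fun X hX Y hY => ?_, ?_, ?_⟩
  · refine Submodule.commutator_mem_span ?_ hX hY
    rintro _ ⟨i, rfl⟩ _ ⟨j, rfl⟩
    rw [commutator_Rvec]
    exact sub_mem (Submodule.subset_span ⟨i, rfl⟩) (Submodule.subset_span ⟨j, rfl⟩)
  · show _ ≤ rateSubmodule n
    exact Submodule.span_le.mpr (Set.range_subset_iff.mpr (Rvec_mem_LGMset n))
  · rw [finrank_span_eq_card (linearIndependent_Rvec hn), Fintype.card_fin]
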